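/- Let k be a field of prime characteristic p with p ≡ 2 (mod 3) and let R = k[x,y]/(x³ + y³). For q = p^e with e ∈ ℕ, consider the R-module (x^q, x y^q)/(x^{q+1}, x y^q), where (x^q, x y^q) and (x^{q+1}, x y^q) are the indicated ideals of R. Then ℓ_R((x^q, x y^q)/(x^{q+1}, x y^q)) = 2 if q ≡ 2 (mod 3) (i.e., e is odd) and = 1 if q ≡ 1 (mod 3) (i.e., e is even). -/

import Mathlib

set_option synthInstance.maxHeartbeats 1000000
set_option maxHeartbeats 1000000

open MvPolynomial

/-- The length of an `R`-module `M`: the Krull dimension of the lattice `Submodule R M`. -/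
noncomputable def moduleLength (R M : Type*) [Ring R] [AddCommGroup M] [Module R M] : ℕ∞ :=
  (Order.krullDim (Submodule R M)).unbotD 0

/-- The ring `R = k[x,y]/(x³ + y³)`, with `x = X 0` and `y = X 1`. -/
abbrev CubicQuot (K : Type*) [Field K] : Type _ :=
  MvPolynomial (Fin 2) K ⧸
    (Ideal.span {X 0 ^ 3 + X 1 ^ 3} : Ideal (MvPolynomial (Fin 2) K))

/-- The image of `x = X 0` in `k[x,y]/(x³ + y³)`. -/
noncomputable def xbar (K : Type*) [Field K] : CubicQuot K :=
  Ideal.Quotient.mk _ (X 0)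

/-- The image of `y = X 1` in `k[x,y]/(x³ + y³)`. -/
noncomputable def ybar (K : Type*) [Field K] : CubicQuot K :=
  Ideal.Quotient.mk _ (X 1)

/-!
Multiplication by `x^q` identifies the module with `R ⧸ A`, where `A = (x^{q+1}, x y^q) : x^q`.
Always `x ∈ A`, and `x³ = -y³` turns `y^j x^q` into `±x^j y^q` for `q ≡ j (mod 3)`, so `y ∈ A`
when `q ≡ 1` and `y² ∈ A` when `q ≡ 2`: then `R ⧸ A` is spanned over `k` by `1`, resp. `1, y`.
For the lower bounds, restricting to the line `y = -x` shows `A ⊆ (x, y)`, and for `q ≡ 2` the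
map `R → k[t][z]/(z³ + t³)`, `x ↦ z`, `y ↦ t`, whose target is free over `k[t]` with basis
`1, z, z²`, sends `(x^{q+1}, x y^q)` into `t^q` times the target but `y x^q` to `±t^{q-1} z²`,
so `y ∉ A`.
-/

theorem moduleLength_eq_length (R M : Type*) [Ring R] [AddCommGroup M] [Module R M] :
    moduleLength R M = Module.length R M := by
  rw [moduleLength, ← Module.coe_length, WithBot.unbotD_coe]

theorem Module.length_le_of_span_range_eq_top {K R M : Type*} [Field K] [Ring R] [Algebra K R]
    [AddCommGroup M] [Module R M] [Module K M] [IsScalarTower K R M] {n : ℕ} (v : Fin n → M)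
    (hv : Submodule.span K (Set.range v) = ⊤) : Module.length R M ≤ n := by
  classical
  calc Module.length R M ≤ Module.length K M := by
        rw [← WithBot.coe_le_coe, Module.coe_length, Module.coe_length]
        exact Order.krullDim_le_of_orderEmbedding (Submodule.restrictScalarsEmbedding K R M)
    _ = (Module.rank K M).toENat := Module.length_eq_rank K M
    _ ≤ n := by
        rw [← rank_top, ← hv, show Set.range v = ↑(Finset.univ.image v) by simp,
          Cardinal.toENat_le_natCast]
        exact (rank_span_finset_le _).trans
          (by simpa using Finset.card_image_le (s := .univ) (f := v))

theorem Module.two_le_length_quotient {R M : Type*} [Ring R] [AddCommGroup M] [Module R M]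
    {N P : Submodule R M} (hNP : N < P) (hP : P < ⊤) : 2 ≤ Module.length R (M ⧸ N) :=
  calc (2 : ℕ∞) = Order.coheight (⊤ : Submodule R M) + 1 + 1 := by norm_num
    _ ≤ Order.coheight P + 1 := by gcongr; exact Order.coheight_add_one_le hP
    _ ≤ Order.coheight N := Order.coheight_add_one_le hNP
    _ = Module.length R (M ⧸ N) := Module.length_quotient.symm

theorem Module.Basis.dvd_of_smul_eq_smul {ι R M : Type*} [CommRing R] [AddCommGroup M]
    [Module R M] (b : Basis ι R M) {i : ι} {c d : R} {v : M} (h : c • b i = d • v) : d ∣ c :=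
  ⟨b.repr v i, by simpa using congrArg (b.repr · i) h⟩

namespace Ideal

variable {R : Type*} [CommRing R]

noncomputable def spanPairQuotEquivQuotColon (u v : R) (J : Ideal R) (hv : v ∈ J) :
    (span {u, v} ⧸ Submodule.comap (span {u, v}).subtype J) ≃ₗ[R] R ⧸ J.colon {u} :=
  let f : R →ₗ[R] span {u, v} ⧸ Submodule.comap (span {u, v}).subtype J :=
    Submodule.mkQ _ ∘ₗ LinearMap.toSpanSingleton R _ ⟨u, subset_span (by simp)⟩
  have hker : LinearMap.ker f = J.colon {u} := by
    ext r
    simp [f, Submodule.Quotient.mk_eq_zero]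
  have hsurj : Function.Surjective f := by
    rintro ⟨w, hw⟩
    obtain ⟨a, b, rfl⟩ := mem_span_pair.mp hw
    refine ⟨a, (Submodule.Quotient.eq _).mpr ?_⟩
    simpa using J.mul_mem_left b hv
  ((Submodule.quotEquivOfEq _ _ hker.symm).trans (f.quotKerEquivOfSurjective hsurj)).symm

end Ideal

theorem pow_mod_three_of_even {p e : ℕ} (hp : p % 3 = 2) (he : Even e) : p ^ e % 3 = 1 := by
  obtain ⟨k, rfl⟩ := he
  rw [← two_mul, pow_mul, Nat.pow_mod, Nat.pow_mod p, hp]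
  simp

theorem pow_mod_three_of_odd {p e : ℕ} (hp : p % 3 = 2) (he : Odd e) : p ^ e % 3 = 2 := by
  obtain ⟨k, rfl⟩ := he
  rw [pow_succ, pow_mul, Nat.mul_mod, Nat.pow_mod, Nat.pow_mod p, hp]
  simp

section CubicQuot

variable (K : Type*) [Field K]

theorem xbar_pow_three : xbar K ^ 3 = -ybar K ^ 3 := by
  rw [xbar, ybar, ← map_pow, ← map_pow, ← map_neg, Ideal.Quotient.eq, sub_neg_eq_add]
  exact Ideal.subset_span rfl

noncomputable def colonIdeal (q : ℕ) : Ideal (CubicQuot K) :=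
  (Ideal.span {xbar K ^ (q + 1), xbar K * ybar K ^ q}).colon {xbar K ^ q}

theorem moduleLength_eq_length_quotient_colonIdeal (q : ℕ) :
    moduleLength (CubicQuot K)
        (↥(Ideal.span {xbar K ^ q, xbar K * ybar K ^ q} : Ideal (CubicQuot K))
          ⧸ Submodule.comap
              (Ideal.span {xbar K ^ q, xbar K * ybar K ^ q} : Ideal (CubicQuot K)).subtype
              (Ideal.span {xbar K ^ (q + 1), xbar K * ybar K ^ q} : Ideal (CubicQuot K))) =
      Module.length (CubicQuot K) (CubicQuot K ⧸ colonIdeal K q) := by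
  rw [moduleLength_eq_length]
  exact (Ideal.spanPairQuotEquivQuotColon _ _ _ (Ideal.subset_span (by simp))).length_eq

theorem xbar_mem_colonIdeal (q : ℕ) : xbar K ∈ colonIdeal K q := by
  rw [colonIdeal, Submodule.mem_colon_singleton, smul_eq_mul, ← pow_succ']
  exact Ideal.subset_span (by simp)

theorem ybar_pow_mem_colonIdeal (m : ℕ) {j : ℕ} (hj : j ≠ 0) :
    ybar K ^ j ∈ colonIdeal K (3 * m + j) := by
  obtain ⟨j, rfl⟩ := Nat.exists_eq_succ_of_ne_zero hj
  have hx : xbar K ^ (3 * m) = (-1) ^ m * ybar K ^ (3 * m) := by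
    rw [pow_mul, xbar_pow_three, pow_mul]
    ring
  rw [colonIdeal, Submodule.mem_colon_singleton, smul_eq_mul,
    show ybar K ^ (j + 1) * xbar K ^ (3 * m + (j + 1)) =
      ((-1) ^ m * xbar K ^ j) * (xbar K * ybar K ^ (3 * m + (j + 1))) by
      linear_combination (ybar K ^ (j + 1) * xbar K ^ (j + 1)) * hx]
  exact Ideal.mul_mem_left _ _ (Ideal.subset_span (by simp))

theorem exists_aeval_eq_mk_of_xbar_mem {I : Ideal (CubicQuot K)} (hx : xbar K ∈ I)
    (r : CubicQuot K) : ∃ P : Polynomial K, Polynomial.aeval (Ideal.Quotient.mk I (ybar K)) P =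
      Ideal.Quotient.mk I r := by
  obtain ⟨P, rfl⟩ := Ideal.Quotient.mk_surjective r
  have h : (Polynomial.aeval (Ideal.Quotient.mk I (ybar K))).comp
      (MvPolynomial.aeval ![0, Polynomial.X]) =
      (Ideal.Quotient.mkₐ K I).comp (Ideal.Quotient.mkₐ K _) := by
    ext i
    fin_cases i
    · simpa [xbar] using (Ideal.Quotient.eq_zero_iff_mem.mpr hx).symm
    · simp [ybar]
  exact ⟨_, AlgHom.congr_fun h P⟩

theorem span_ybar_pow_eq_top {I : Ideal (CubicQuot K)} (hx : xbar K ∈ I) {n : ℕ}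
    (hy : ybar K ^ n ∈ I) :
    Submodule.span K (Set.range fun i : Fin n ↦ Ideal.Quotient.mk I (ybar K ^ (i : ℕ))) = ⊤ := by
  refine eq_top_iff.mpr fun v _ ↦ ?_
  obtain ⟨r, rfl⟩ := Ideal.Quotient.mk_surjective v
  obtain ⟨P, hP⟩ := exists_aeval_eq_mk_of_xbar_mem K hx r
  have hroot :
      Polynomial.aeval (Ideal.Quotient.mk I (ybar K)) (Polynomial.X ^ n : Polynomial K) = 0 := by
    rw [map_pow, Polynomial.aeval_X, ← map_pow, Ideal.Quotient.eq_zero_iff_mem]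
    exact hy
  have hdeg : (P %ₘ Polynomial.X ^ n).degree < n := by
    simpa using Polynomial.degree_modByMonic_lt P (Polynomial.monic_X_pow n)
  rw [← hP, ← Polynomial.aeval_modByMonic_eq_self_of_root hroot, Polynomial.aeval_eq_sum_range]
  refine Submodule.sum_mem _ fun i _ ↦ ?_
  rcases lt_or_ge i n with hi | hi
  · rw [← map_pow]
    exact Submodule.smul_mem _ _ (Submodule.subset_span ⟨⟨i, hi⟩, rfl⟩)
  · rw [Polynomial.coeff_eq_zero_of_degree_lt (hdeg.trans_le (by exact_mod_cast hi)), zero_smul]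
    exact zero_mem _

theorem length_quotient_le_of_xbar_mem {I : Ideal (CubicQuot K)} (hx : xbar K ∈ I) {n : ℕ}
    (hy : ybar K ^ n ∈ I) : Module.length (CubicQuot K) (CubicQuot K ⧸ I) ≤ n :=
  Module.length_le_of_span_range_eq_top _ (span_ybar_pow_eq_top K hx hy)

noncomputable def restrictToLine : CubicQuot K →+* Polynomial K :=
  Ideal.Quotient.lift _ (MvPolynomial.aeval ![Polynomial.X, -Polynomial.X]).toRingHom <| by
    intro a ha
    obtain ⟨b, rfl⟩ := Ideal.mem_span_singleton'.mp ha
    simp [Odd.neg_pow (by decide : Odd 3)]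

theorem restrictToLine_xbar : restrictToLine K (xbar K) = Polynomial.X := by
  simp [restrictToLine, xbar]

theorem restrictToLine_ybar : restrictToLine K (ybar K) = -Polynomial.X := by
  simp [restrictToLine, ybar]

/-- The ideal `(x, y)` of the origin. -/
noncomputable def originIdeal : Ideal (CubicQuot K) :=
  RingHom.ker (Polynomial.constantCoeff.comp (restrictToLine K))

theorem originIdeal_ne_top : originIdeal K ≠ ⊤ :=
  RingHom.ker_ne_top _

theorem ybar_mem_originIdeal : ybar K ∈ originIdeal K := by
  simp [originIdeal, restrictToLine_ybar]

theorem colonIdeal_le_originIdeal (q : ℕ) : colonIdeal K q ≤ originIdeal K := by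
  intro r hr
  rw [colonIdeal, Submodule.mem_colon_singleton, smul_eq_mul] at hr
  have hJ : Ideal.span {xbar K ^ (q + 1), xbar K * ybar K ^ q} ≤
      (Ideal.span {Polynomial.X ^ (q + 1)}).comap (restrictToLine K) := by
    rw [Ideal.span_le, Set.insert_subset_iff, Set.singleton_subset_iff]
    refine ⟨?_, ?_⟩ <;> simp only [SetLike.mem_coe, Ideal.mem_comap, Ideal.mem_span_singleton]
    · simp [restrictToLine_xbar]
    · refine ⟨(-1) ^ q, ?_⟩
      rw [map_mul, map_pow, restrictToLine_xbar, restrictToLine_ybar, neg_eq_neg_one_mul, mul_pow]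
      ring
  have h := Ideal.mem_span_singleton.mp (hJ hr)
  rw [map_mul, map_pow, restrictToLine_xbar, pow_succ, mul_comm] at h
  have := (mul_dvd_mul_iff_right (pow_ne_zero q Polynomial.X_ne_zero)).mp h
  simpa [originIdeal, Polynomial.X_dvd_iff] using this

noncomputable def cubicOverPolynomial : Polynomial (Polynomial K) :=
  Polynomial.X ^ 3 + Polynomial.C (Polynomial.X ^ 3)

theorem cubicOverPolynomial_monic : (cubicOverPolynomial K).Monic :=
  Polynomial.monic_X_pow_add (Polynomial.degree_C_le.trans_lt (by norm_num))

theorem cubicOverPolynomial_natDegree : (cubicOverPolynomial K).natDegree = 3 :=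
  Polynomial.natDegree_X_pow_add_C

theorem root_pow_three :
    AdjoinRoot.root (cubicOverPolynomial K) ^ 3 =
      -AdjoinRoot.of (cubicOverPolynomial K) Polynomial.X ^ 3 := by
  have h : AdjoinRoot.mk (cubicOverPolynomial K)
      (Polynomial.X ^ 3 + Polynomial.C (Polynomial.X ^ 3)) = 0 := AdjoinRoot.mk_self
  rw [map_add, map_pow, AdjoinRoot.mk_X, AdjoinRoot.mk_C, map_pow] at h
  exact eq_neg_of_add_eq_zero_left h

noncomputable def toAdjoinRoot : CubicQuot K →+* AdjoinRoot (cubicOverPolynomial K) :=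
  Ideal.Quotient.lift _ (MvPolynomial.eval₂Hom ((AdjoinRoot.of _).comp Polynomial.C)
      ![AdjoinRoot.root _, AdjoinRoot.of _ Polynomial.X]) <| by
    intro a ha
    obtain ⟨b, rfl⟩ := Ideal.mem_span_singleton'.mp ha
    simp [root_pow_three]

theorem toAdjoinRoot_xbar : toAdjoinRoot K (xbar K) = AdjoinRoot.root _ := by
  simp [toAdjoinRoot, xbar]

theorem toAdjoinRoot_ybar : toAdjoinRoot K (ybar K) = AdjoinRoot.of _ Polynomial.X := by
  simp [toAdjoinRoot, ybar]

theorem ybar_not_mem_colonIdeal (m : ℕ) : ybar K ∉ colonIdeal K (3 * m + 2) := by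
  set z := AdjoinRoot.root (cubicOverPolynomial K)
  set t := AdjoinRoot.of (cubicOverPolynomial K) Polynomial.X
  have hz3 : z ^ 3 = -t ^ 3 := root_pow_three K
  have hz : z ^ (3 * m) = (-1) ^ m * t ^ (3 * m) := by
    rw [pow_mul, hz3, pow_mul]
    ring
  have hJ : Ideal.span {xbar K ^ (3 * m + 2 + 1), xbar K * ybar K ^ (3 * m + 2)} ≤
      (Ideal.span {t ^ (3 * m + 2)}).comap (toAdjoinRoot K) := by
    rw [Ideal.span_le, Set.insert_subset_iff, Set.singleton_subset_iff]
    refine ⟨?_, ?_⟩ <;>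
      simp only [SetLike.mem_coe, Ideal.mem_comap, Ideal.mem_span_singleton', map_mul, map_pow,
        toAdjoinRoot_xbar, toAdjoinRoot_ybar]
    · exact ⟨-(-1) ^ m * t, by linear_combination (-z ^ 3) * hz - (-1) ^ m * t ^ (3 * m) * hz3⟩
    · exact ⟨z, rfl⟩
  intro hy
  rw [colonIdeal, Submodule.mem_colon_singleton, smul_eq_mul] at hy
  obtain ⟨s, hs⟩ := Ideal.mem_span_singleton'.mp (hJ hy)
  let b := (AdjoinRoot.powerBasis' (cubicOverPolynomial_monic K)).basis
  have hsmul : ((-1) ^ m * Polynomial.X ^ (3 * m + 1) : Polynomial K) •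
      b ⟨2, by simp [cubicOverPolynomial_natDegree]⟩ =
      (Polynomial.X ^ (3 * m + 2) : Polynomial K) • s := by
    simp only [b, PowerBasis.coe_basis, AdjoinRoot.powerBasis'_gen, Algebra.smul_def,
      AdjoinRoot.algebraMap_eq, map_mul, map_pow, map_neg, map_one]
    rw [mul_comm _ s, hs, map_mul, map_pow, toAdjoinRoot_xbar, toAdjoinRoot_ybar]
    linear_combination (-(t * z ^ 2)) * hz
  have hdvd := b.dvd_of_smul_eq_smul hsmul
  rw [((isUnit_neg_one).pow m).dvd_mul_left,
    pow_dvd_pow_iff Polynomial.X_ne_zero Polynomial.not_isUnit_X] at hdvd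
  omega

theorem length_quotient_colonIdeal_three_mul_add_one (m : ℕ) :
    Module.length (CubicQuot K) (CubicQuot K ⧸ colonIdeal K (3 * m + 1)) = 1 := by
  have : Nontrivial (CubicQuot K ⧸ colonIdeal K (3 * m + 1)) :=
    Ideal.Quotient.nontrivial_iff.mpr (ne_top_of_le_ne_top (originIdeal_ne_top K)
      (colonIdeal_le_originIdeal K _))
  refine le_antisymm ?_ (Order.one_le_iff_pos.mpr Module.length_pos)
  simpa using length_quotient_le_of_xbar_mem K (xbar_mem_colonIdeal K _)
    (ybar_pow_mem_colonIdeal K m one_ne_zero)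

theorem length_quotient_colonIdeal_three_mul_add_two (m : ℕ) :
    Module.length (CubicQuot K) (CubicQuot K ⧸ colonIdeal K (3 * m + 2)) = 2 := by
  refine le_antisymm (length_quotient_le_of_xbar_mem K (xbar_mem_colonIdeal K _)
    (ybar_pow_mem_colonIdeal K m two_ne_zero)) (Module.two_le_length_quotient
      (P := colonIdeal K (3 * m + 2) ⊔ Ideal.span {ybar K}) ?_ ?_)
  · exact left_lt_sup.mpr fun h ↦
      ybar_not_mem_colonIdeal K m (h (Ideal.mem_span_singleton_self _))
  · refine lt_top_iff_ne_top.mpr (ne_top_of_le_ne_top (originIdeal_ne_top K) (sup_le ?_ ?_))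
    · exact colonIdeal_le_originIdeal K _
    · exact (Ideal.span_singleton_le_iff_mem _).mpr (ybar_mem_originIdeal K)

end CubicQuot

theorem length_ideal_quot_cubic_general (K : Type*) [Field K] (p : ℕ)
    (hp3 : p % 3 = 2) (e : ℕ) (q : ℕ) (hq : q = p ^ e) :
    (Odd e →
      moduleLength (CubicQuot K)
        (↥(Ideal.span {xbar K ^ q, xbar K * ybar K ^ q} : Ideal (CubicQuot K))
          ⧸ Submodule.comap
              (Ideal.span {xbar K ^ q, xbar K * ybar K ^ q} : Ideal (CubicQuot K)).subtype
              (Ideal.span {xbar K ^ (q + 1), xbar K * ybar K ^ q} : Ideal (CubicQuot K)))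
        = 2)
    ∧ (Even e →
      moduleLength (CubicQuot K)
        (↥(Ideal.span {xbar K ^ q, xbar K * ybar K ^ q} : Ideal (CubicQuot K))
          ⧸ Submodule.comap
              (Ideal.span {xbar K ^ q, xbar K * ybar K ^ q} : Ideal (CubicQuot K)).subtype
              (Ideal.span {xbar K ^ (q + 1), xbar K * ybar K ^ q} : Ideal (CubicQuot K)))
        = 1) := by
  rw [moduleLength_eq_length_quotient_colonIdeal]
  refine ⟨fun he ↦ ?_, fun he ↦ ?_⟩
  · have hq3 := pow_mod_three_of_odd hp3 he
    obtain ⟨m, rfl⟩ : ∃ m, q = 3 * m + 2 := ⟨q / 3, by omega⟩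
    exact length_quotient_colonIdeal_three_mul_add_two K m
  · have hq3 := pow_mod_three_of_even hp3 he
    obtain ⟨m, rfl⟩ : ∃ m, q = 3 * m + 1 := ⟨q / 3, by omega⟩
    exact length_quotient_colonIdeal_three_mul_add_one K m

/-- Let `k` be a field of prime characteristic `p ≡ 2 (mod 3)`, let
`R = k[x,y]/(x³ + y³)` and write `x, y` for the images of the variables. For `q = p^e`,
`ℓ_R((x^q, x y^q)/(x^{q+1}, x y^q))` equals `2` if `e` is odd (`q ≡ 2 (mod 3)`) and `1` if
`e` is even (`q ≡ 1 (mod 3)`). -/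
theorem length_ideal_quot_cubic (K : Type*) [Field K] (p : ℕ) (hp : p.Prime) [CharP K p]
    (hp3 : p % 3 = 2) (e : ℕ) (q : ℕ) (hq : q = p ^ e) :
    (Odd e →
      moduleLength (CubicQuot K)
        (↥(Ideal.span {xbar K ^ q, xbar K * ybar K ^ q} : Ideal (CubicQuot K))
          ⧸ Submodule.comap
              (Ideal.span {xbar K ^ q, xbar K * ybar K ^ q} : Ideal (CubicQuot K)).subtype
              (Ideal.span {xbar K ^ (q + 1), xbar K * ybar K ^ q} : Ideal (CubicQuot K)))
        = 2)
    ∧ (Even e →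
      moduleLength (CubicQuot K)
        (↥(Ideal.span {xbar K ^ q, xbar K * ybar K ^ q} : Ideal (CubicQuot K))
          ⧸ Submodule.comap
              (Ideal.span {xbar K ^ q, xbar K * ybar K ^ q} : Ideal (CubicQuot K)).subtype
              (Ideal.span {xbar K ^ (q + 1), xbar K * ybar K ^ q} : Ideal (CubicQuot K)))
        = 1) :=
  length_ideal_quot_cubic_general K p hp3 e q hq
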